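/- arXiv:2309.01570 — 4 statements merged into one kernel-verified Lean document; each statement's English description precedes it below -/
import Mathlib

section
/- (Progress of the inexact cubic Newton step.) Let f: ℝ^d → ℝ be twice continuously differentiable with L₂-Lipschitz-continuous Hessian and let M ≥ 4L₂. Let v, x₊ ∈ ℝ^d, g ∈ ℝ^d, let H: ℝ^d → ℝ^d be a symmetric linear map, and let δ₂ ≥ 0 satisfy ‖(H − ∇²f(v))(x₊ − v)‖ ≤ δ₂‖x₊ − v‖. Let δ̄ ≥ 4δ₂ with δ̄ > 0, let τ ≥ 0, and suppose the gradient of the regularized model is τ-small at x₊: ‖g + H(x₊−v) + δ̄(x₊−v) + (M/2)‖x₊−v‖(x₊−v)‖ ≤ τ. Then τ²/δ̄ + (2/δ̄)‖g − ∇f(v)‖² + ⟨∇f(x₊), v − x₊⟩ ≥ min{ ‖∇f(x₊)‖²/(4δ̄), ‖∇f(x₊)‖^{3/2}·(1/(3M))^{1/2} }. -/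
open scoped RealInnerProductSpace

/-!
Write `r = x₊ - v`, `R = ‖r‖`, `A = ‖∇f(x₊)‖` and `λ = δ̄ + (M/2) R`. Comparing `∇f(x₊)` with the
linear model `g + H r` (Taylor's bound for a Lipschitz Hessian, plus the Hessian error `δ₂ R`)
and using the small model gradient gives `‖∇f(x₊) + λ r‖ ≤ τ + ‖g - ∇f(v)‖ + λ R / 4`: the
regularization absorbs both errors because `δ₂ ≤ δ̄/4` and `L₂ ≤ M/4`. Expanding `‖∇f(x₊) + λ r‖²`
turns this into `⟪∇f(x₊), v - x₊⟫ + (τ² + 2‖g - ∇f(v)‖²)/δ̄ ≥ A²/(2λ) + (3/8) λ R²`.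
If `λ ≤ 2δ̄` this is at least `A²/(4δ̄)`; otherwise `M R/2 ≤ λ ≤ M R`, and minimizing
`A²/(2MR) + (3/16) M R³` over `R` leaves at least `A^{3/2} / √(3M)`.
-/

theorem norm_sub_sub_fderiv_le_of_lipschitz_fderiv {E F : Type*} [NormedAddCommGroup E]
    [NormedSpace ℝ E] [NormedAddCommGroup F] [NormedSpace ℝ F] {φ : E → F} {L : ℝ}
    (hφ : Differentiable ℝ φ)
    (hLip : ∀ x y, ‖fderiv ℝ φ x - fderiv ℝ φ y‖ ≤ L * ‖x - y‖) (x y : E) :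
    ‖φ y - φ x - fderiv ℝ φ x (y - x)‖ ≤ L / 2 * ‖y - x‖ ^ 2 := by
  obtain ⟨r, rfl⟩ : ∃ r, y = x + r := ⟨y - x, by abel⟩
  rw [add_sub_cancel_left]
  have hline (θ : ℝ) : HasDerivAt (fun θ : ℝ => x + θ • r) r θ := by
    simpa using ((hasDerivAt_id θ).smul_const r).const_add x
  have hderiv (θ : ℝ) : HasDerivAt (fun θ : ℝ => φ (x + θ • r) - φ x - θ • fderiv ℝ φ x r)
      (fderiv ℝ φ (x + θ • r) r - fderiv ℝ φ x r) θ := by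
    have := ((hφ _).hasFDerivAt.comp_hasDerivAt θ (hline θ)).sub_const (φ x)
    exact this.sub (by simpa using (hasDerivAt_id' θ).smul_const (fderiv ℝ φ x r))
  have hbound (θ : ℝ) (hθ : θ ∈ Set.Ico (0 : ℝ) 1) :
      ‖fderiv ℝ φ (x + θ • r) r - fderiv ℝ φ x r‖ ≤ L * ‖r‖ ^ 2 * θ := by
    calc ‖fderiv ℝ φ (x + θ • r) r - fderiv ℝ φ x r‖
        = ‖(fderiv ℝ φ (x + θ • r) - fderiv ℝ φ x) r‖ := rfl
      _ ≤ L * ‖x + θ • r - x‖ * ‖r‖ :=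
        ((fderiv ℝ φ (x + θ • r) - fderiv ℝ φ x).le_opNorm r).trans
          (mul_le_mul_of_nonneg_right (hLip _ _) (norm_nonneg r))
      _ = L * ‖r‖ ^ 2 * θ := by
        rw [add_sub_cancel_left, norm_smul, Real.norm_of_nonneg hθ.1]
        ring
  have hB (θ : ℝ) : HasDerivAt (fun θ : ℝ => L / 2 * ‖r‖ ^ 2 * θ ^ 2) (L * ‖r‖ ^ 2 * θ) θ :=
    ((hasDerivAt_pow 2 θ).const_mul (L / 2 * ‖r‖ ^ 2)).congr_deriv (by push_cast; ring)
  have := image_norm_le_of_norm_deriv_right_le_deriv_boundary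
    (fun θ _ => (hderiv θ).continuousAt.continuousWithinAt)
    (fun θ _ => (hderiv θ).hasDerivWithinAt) (by simp) hB hbound
    (Set.right_mem_Icc.2 zero_le_one)
  simpa using this

theorem ContDiff.differentiable_gradient {E : Type*} [NormedAddCommGroup E]
    [InnerProductSpace ℝ E] [CompleteSpace E] {f : E → ℝ} (hf : ContDiff ℝ 2 f) :
    Differentiable ℝ (gradient f) :=
  ((InnerProductSpace.toDual ℝ E).symm.toContinuousLinearEquiv.contDiff.comp
    (hf.fderiv_right (m := 1) (by norm_num))).differentiable one_ne_zero

theorem norm_sub_model_le_of_lipschitz_fderiv {E F : Type*} [NormedAddCommGroup E]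
    [NormedSpace ℝ E] [NormedAddCommGroup F] [NormedSpace ℝ F] {φ : E → F} {L δ : ℝ}
    (hφ : Differentiable ℝ φ)
    (hLip : ∀ x y, ‖fderiv ℝ φ x - fderiv ℝ φ y‖ ≤ L * ‖x - y‖) {x y : E} {g : F}
    {H : E →L[ℝ] F} (hH : ‖(H - fderiv ℝ φ x) (y - x)‖ ≤ δ * ‖y - x‖) :
    ‖φ y - (g + H (y - x))‖ ≤ ‖g - φ x‖ + δ * ‖y - x‖ + L / 2 * ‖y - x‖ ^ 2 := by
  have hsplit : φ y - (g + H (y - x)) =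
      (φ y - φ x - fderiv ℝ φ x (y - x)) - (g - φ x) - (H - fderiv ℝ φ x) (y - x) := by
    rw [sub_apply]; abel
  rw [hsplit]
  have := norm_sub_sub_fderiv_le_of_lipschitz_fderiv hφ hLip x y
  linarith [norm_sub_le (φ y - φ x - fderiv ℝ φ x (y - x) - (g - φ x))
      ((H - fderiv ℝ φ x) (y - x)), norm_sub_le (φ y - φ x - fderiv ℝ φ x (y - x)) (g - φ x)]

theorem two_mul_real_inner_sub_eq {E : Type*} [NormedAddCommGroup E] [InnerProductSpace ℝ E]
    (G x y : E) (c : ℝ) :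
    2 * c * ⟪G, x - y⟫ = c ^ 2 * ‖y - x‖ ^ 2 + ‖G‖ ^ 2 - ‖G + c • (y - x)‖ ^ 2 := by
  rw [norm_add_sq_real, real_inner_smul_right, norm_smul, Real.norm_eq_abs, mul_pow, sq_abs,
    ← neg_sub y x, inner_neg_right]
  ring

theorem rpow_three_halves_mul_rpow_half_le {A M R : ℝ} (hA : 0 ≤ A) (hM : 0 < M) (hR : 0 < R) :
    A ^ ((3 : ℝ) / 2) * (1 / (3 * M)) ^ ((1 : ℝ) / 2) ≤
      A ^ 2 / (2 * M * R) + 3 / 16 * M * R ^ 3 := by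
  have hsqrt : A ^ ((3 : ℝ) / 2) * (1 / (3 * M)) ^ ((1 : ℝ) / 2) = A * √(A / (3 * M)) := by
    rw [show (3 : ℝ) / 2 = 1 + 1 / 2 by norm_num, Real.rpow_add' hA (by norm_num), Real.rpow_one,
      ← Real.sqrt_eq_rpow, ← Real.sqrt_eq_rpow, mul_assoc, ← Real.sqrt_mul hA, mul_one_div]
  obtain ⟨K, hK, rfl⟩ : ∃ K, 0 ≤ K ∧ A = 3 * M * K ^ 2 :=
    ⟨√(A / (3 * M)), Real.sqrt_nonneg _, by rw [Real.sq_sqrt (by positivity)]; field_simp⟩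
  rw [hsqrt, show 3 * M * K ^ 2 / (3 * M) = K ^ 2 by field_simp, Real.sqrt_sq hK,
    div_add' _ _ _ (by positivity), le_div_iff₀ (by positivity)]
  -- `24 K⁴ + R⁴ - 16 K³ R = (R² - 2K²)² + 4K²(R - 2K)² + 4K⁴`
  have key : 16 * K ^ 3 * R ≤ 24 * K ^ 4 + R ^ 4 := by
    nlinarith [sq_nonneg (R ^ 2 - 2 * K ^ 2), sq_nonneg (K * (R - 2 * K)), pow_nonneg hK 4]
  nlinarith [mul_le_mul_of_nonneg_left key (sq_nonneg M)]

theorem min_le_sq_div_add {δ M R A : ℝ} (hδ : 0 < δ) (hR : 0 ≤ R) (hMR : 0 ≤ M * R)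
    (hA : 0 ≤ A) :
    min (A ^ 2 / (4 * δ)) (A ^ ((3 : ℝ) / 2) * (1 / (3 * M)) ^ ((1 : ℝ) / 2)) ≤
      A ^ 2 / (2 * (δ + M / 2 * R)) + 3 / 8 * (δ + M / 2 * R) * R ^ 2 := by
  have hlam : 0 < δ + M / 2 * R := by linarith
  rcases le_or_gt (M * R) (2 * δ) with hsmall | hlarge
  · refine (min_le_left _ _).trans (le_add_of_le_of_nonneg ?_ (by positivity))
    exact div_le_div_of_nonneg_left (sq_nonneg A) (by positivity) (by linarith)
  · have hMR' : 0 < M * R := by linarith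
    have hR' : 0 < R := hR.lt_of_ne (right_ne_zero_of_mul hMR'.ne').symm
    have hM : 0 < M := pos_of_mul_pos_left hMR' hR
    refine (min_le_right _ _).trans ((rpow_three_halves_mul_rpow_half_le hA hM hR').trans ?_)
    gcongr ?_ + ?_
    · exact div_le_div_of_nonneg_left (sq_nonneg A) (by positivity) (by linarith)
    · nlinarith [pow_pos hR' 2]

theorem sq_div_add_le_of_norm_le {t a R δ lam A N ip : ℝ} (hδ : 0 < δ) (hδlam : δ ≤ lam)
    (hN0 : 0 ≤ N) (hN : N ≤ t + a + lam * R / 4)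
    (hip : 2 * lam * ip = lam ^ 2 * R ^ 2 + A ^ 2 - N ^ 2) :
    A ^ 2 / (2 * lam) + 3 / 8 * lam * R ^ 2 ≤ t ^ 2 / δ + 2 / δ * a ^ 2 + ip := by
  have hlam : 0 < lam := hδ.trans_le hδlam
  have hN2 : N ^ 2 ≤ 2 * t ^ 2 + 4 * a ^ 2 + lam ^ 2 * R ^ 2 / 4 := by
    nlinarith [sq_nonneg (t + a - 3 * (lam * R / 4)), sq_nonneg (t - 2 * a)]
  have hip' : A ^ 2 / (2 * lam) + 3 / 8 * lam * R ^ 2 - (t ^ 2 + 2 * a ^ 2) / lam ≤ ip := by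
    rw [show A ^ 2 / (2 * lam) + 3 / 8 * lam * R ^ 2 - (t ^ 2 + 2 * a ^ 2) / lam
        = (A ^ 2 + 3 / 4 * lam ^ 2 * R ^ 2 - 2 * t ^ 2 - 4 * a ^ 2) / (2 * lam) by field_simp; ring,
      div_le_iff₀ (by positivity)]
    linarith
  have hδlam' : (t ^ 2 + 2 * a ^ 2) / lam ≤ (t ^ 2 + 2 * a ^ 2) / δ :=
    div_le_div_of_nonneg_left (by positivity) hδ hδlam
  rw [show t ^ 2 / δ + 2 / δ * a ^ 2 = (t ^ 2 + 2 * a ^ 2) / δ by ring]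
  linarith

theorem inexact_cubic_newton_step_progress_general
    (d : ℕ) (f : EuclideanSpace ℝ (Fin d) → ℝ) (L₂ M : ℝ)
    (hf : ContDiff ℝ 2 f)
    (hLip : ∀ x y : EuclideanSpace ℝ (Fin d),
      ‖fderiv ℝ (gradient f) x - fderiv ℝ (gradient f) y‖ ≤ L₂ * ‖x - y‖)
    (hM : 4 * L₂ ≤ M)
    (v xp g : EuclideanSpace ℝ (Fin d))
    (H : EuclideanSpace ℝ (Fin d) →L[ℝ] EuclideanSpace ℝ (Fin d))
    (δ₂ : ℝ)
    (hHin : ‖(H - fderiv ℝ (gradient f) v) (xp - v)‖ ≤ δ₂ * ‖xp - v‖)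
    (δb τ : ℝ) (hδb : 4 * δ₂ ≤ δb) (hδbpos : 0 < δb)
    (hstep : ‖g + H (xp - v) + δb • (xp - v) + ((M / 2) * ‖xp - v‖) • (xp - v)‖ ≤ τ) :
    τ ^ 2 / δb + (2 / δb) * ‖g - gradient f v‖ ^ 2 + ⟪gradient f xp, v - xp⟫ ≥
      min (‖gradient f xp‖ ^ 2 / (4 * δb))
        (‖gradient f xp‖ ^ ((3 : ℝ) / 2) * (1 / (3 * M)) ^ ((1 : ℝ) / 2)) := by
  have hmodel := norm_sub_model_le_of_lipschitz_fderiv hf.differentiable_gradient hLip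
    (g := g) hHin
  have hMR : 0 ≤ M * ‖xp - v‖ := by
    have hL₂ := (norm_nonneg _).trans (hLip xp v)
    nlinarith [mul_le_mul_of_nonneg_right hM (norm_nonneg (xp - v))]
  rw [add_assoc, ← add_smul] at hstep
  set R := ‖xp - v‖
  have hN : ‖gradient f xp + (δb + M / 2 * R) • (xp - v)‖ ≤
      τ + ‖g - gradient f v‖ + (δb + M / 2 * R) * R / 4 := by
    have hsplit : ‖gradient f xp + (δb + M / 2 * R) • (xp - v)‖ ≤
        ‖gradient f xp - (g + H (xp - v))‖ + ‖g + H (xp - v) + (δb + M / 2 * R) • (xp - v)‖ :=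
      (norm_add_le _ _).trans_eq' (by congr 1; abel)
    linarith [mul_le_mul_of_nonneg_right hδb (norm_nonneg (xp - v)),
      mul_le_mul_of_nonneg_right hM (sq_nonneg R)]
  exact (min_le_sq_div_add hδbpos (norm_nonneg _) hMR (norm_nonneg _)).trans
    (sq_div_add_le_of_norm_le hδbpos (by linarith) (norm_nonneg _) hN
      (two_mul_real_inner_sub_eq _ _ _ _))

/-- Progress of the inexact cubic Newton step. -/
theorem inexact_cubic_newton_step_progress
    (d : ℕ) (f : EuclideanSpace ℝ (Fin d) → ℝ) (L₂ M : ℝ)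
    (hf : ContDiff ℝ 2 f)
    (hLip : ∀ x y : EuclideanSpace ℝ (Fin d),
      ‖fderiv ℝ (gradient f) x - fderiv ℝ (gradient f) y‖ ≤ L₂ * ‖x - y‖)
    (hM : 4 * L₂ ≤ M)
    (v xp g : EuclideanSpace ℝ (Fin d))
    (H : EuclideanSpace ℝ (Fin d) →L[ℝ] EuclideanSpace ℝ (Fin d))
    (hH : ∀ u w : EuclideanSpace ℝ (Fin d), ⟪H u, w⟫ = ⟪u, H w⟫)
    (δ₂ : ℝ) (hδ₂ : 0 ≤ δ₂)
    (hHin : ‖(H - fderiv ℝ (gradient f) v) (xp - v)‖ ≤ δ₂ * ‖xp - v‖)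
    (δb τ : ℝ) (hδb : 4 * δ₂ ≤ δb) (hδbpos : 0 < δb) (hτ : 0 ≤ τ)
    (hstep : ‖g + H (xp - v) + δb • (xp - v) + ((M / 2) * ‖xp - v‖) • (xp - v)‖ ≤ τ) :
    τ ^ 2 / δb + (2 / δb) * ‖g - gradient f v‖ ^ 2 + ⟪gradient f xp, v - xp⟫ ≥
      min (‖gradient f xp‖ ^ 2 / (4 * δb))
        (‖gradient f xp‖ ^ ((3 : ℝ) / 2) * (1 / (3 * M)) ^ ((1 : ℝ) / 2)) :=
  inexact_cubic_newton_step_progress_general d f L₂ M hf hLip hM v xp g H δ₂ hHin δb τ hδb hδbpos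
    hstep
end

section
/- Let n ≥ 1, let h: ℝ^n → ℝ be convex, let x₀ ∈ ℝ^n, let p ≥ 1 be an integer, and let θ_i ≥ 0 for i = 2,…,p+1. Define d_i(x) = (1/i)‖x‖^i and h̄(x) = h(x) + Σ_{i=2}^{p+1} θ_i d_i(x − x₀). If x̄ is a global minimizer of h̄ over ℝ^n, then for all x ∈ ℝ^n, h̄(x) ≥ h̄(x̄) + Σ_{i=2}^{p+1} (1/2)^{i−2} θ_i d_i(x − x̄). -/
/-!
Write `g = ∑ θᵢ dᵢ(· - x₀)`. Each `‖·‖^(k+2)` satisfies the first-order growth bound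
`‖x‖^(k+2) ≥ ‖y‖^(k+2) + (k+2)‖y‖^k ⟪y, x - y⟫ + (1/2)^k ‖x - y‖^(k+2)`: along `[y, x]` the
difference of the two sides has a nonnegative derivative, by the monotonicity of the gradient
`⟪‖a‖^k a - ‖b‖^k b, a - b⟫ ≥ (1/2)^k ‖a - b‖^(k+2)`. Summing gives
`g x ≥ g x̄ + g'(x̄)(x - x̄) + ∑ (1/2)^(i-2) θᵢ dᵢ(x - x̄)`. Since `x̄` minimizes `h + g`, with `h`
convex and `g` differentiable, the one-sided slope at `x̄` along `[x̄, x]` gives the optimality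
condition `h x - h x̄ ≥ -g'(x̄)(x - x̄)`. Adding the two inequalities proves the claim.
-/

open Set RealInnerProductSpace

variable {E : Type*} [NormedAddCommGroup E] [InnerProductSpace ℝ E]

theorem hasFDerivAt_norm_pow_add_two (k : ℕ) (x : E) :
    HasFDerivAt (fun x : E ↦ ‖x‖ ^ (k + 2)) (((k + 2 : ℝ) * ‖x‖ ^ k) • innerSL ℝ x) x := by
  have h := hasFDerivAt_norm_rpow x (p := k + 2) (by linarith [k.cast_nonneg (α := ℝ)])
  simp only [add_sub_cancel_right] at h
  convert h using 2 with y <;> norm_cast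

theorem hasDerivAt_norm_add_smul_pow_add_two (k : ℕ) (y w : E) (t : ℝ) :
    HasDerivAt (fun t : ℝ ↦ ‖y + t • w‖ ^ (k + 2))
      ((k + 2) * ‖y + t • w‖ ^ k * ⟪y + t • w, w⟫) t := by
  have hline : HasDerivAt (fun t : ℝ ↦ y + t • w) w t :=
    ((hasDerivAt_id t).smul_const w).const_add y |>.congr_deriv (one_smul ℝ w)
  refine ((hasFDerivAt_norm_pow_add_two k (y + t • w)).comp_hasDerivAt t hline).congr_deriv ?_
  simp only [smul_apply, innerSL_apply_apply, smul_eq_mul]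

theorem ConvexOn.fderiv_le_sub_of_isMinOn_add {h g : E → ℝ} {g' : E →L[ℝ] ℝ} {a : E}
    (hh : ConvexOn ℝ univ h) (hg : HasFDerivAt g g' a)
    (hmin : IsMinOn (fun x ↦ h x + g x) univ a) (x : E) : g' (a - x) ≤ h x - h a := by
  -- by convexity of `h`, `h a + φ t` bounds `h + g` on `[a, x]`, with equality at `t = 0`
  set φ : ℝ → ℝ := fun t ↦ t * (h x - h a) + g (a + t • (x - a))
  have hφ : HasDerivAt φ (h x - h a + g' (x - a)) 0 := by
    have hline : HasDerivAt (fun t : ℝ ↦ a + t • (x - a)) (x - a) 0 :=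
      ((hasDerivAt_id 0).smul_const (x - a)).const_add a |>.congr_deriv (one_smul ℝ _)
    have hg0 : HasFDerivAt g g' (a + (0 : ℝ) • (x - a)) := by rwa [zero_smul, add_zero]
    exact (hasDerivAt_mul_const (h x - h a)).add (hg0.comp_hasDerivAt 0 hline)
  have hloc : IsLocalMinOn φ (Icc 0 1) 0 := by
    refine IsMinOn.localize fun t ⟨ht0, ht1⟩ ↦ ?_
    have hconv : h (a + t • (x - a)) ≤ h a + t * (h x - h a) := by
      rw [show a + t • (x - a) = (1 - t) • a + t • x by module]
      have := hh.2 (mem_univ a) (mem_univ x) (sub_nonneg.2 ht1) ht0 (sub_add_cancel 1 t)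
      rw [smul_eq_mul, smul_eq_mul] at this
      linarith
    have := isMinOn_univ_iff.1 hmin (a + t • (x - a))
    simp only [φ, zero_mul, zero_smul, add_zero, zero_add, mem_ofPred_eq]
    linarith
  have hone : (1 : ℝ) ∈ posTangentConeAt (Icc 0 1) 0 :=
    mem_posTangentConeAt_of_segment_subset (by simp [segment_eq_Icc])
  have := hloc.hasFDerivWithinAt_nonneg hφ.hasFDerivAt.hasFDerivWithinAt hone
  rw [ContinuousLinearMap.toSpanSingleton_apply, one_smul] at this
  rw [← neg_sub x a, map_neg]
  linarith

theorem half_pow_mul_norm_sub_pow_le_inner (k : ℕ) (a b : E) :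
    (1 / 2 : ℝ) ^ k * ‖a - b‖ ^ (k + 2)
      ≤ ‖a‖ ^ k * ⟪a, a - b⟫ - ‖b‖ ^ k * ⟪b, a - b⟫ := by
  have ha : 0 ≤ ‖a‖ := norm_nonneg a
  have hb : 0 ≤ ‖b‖ := norm_nonneg b
  -- the right-hand side splits into two nonnegative parts through ‖a - b‖² = ‖a‖² - 2⟪a, b⟫ + ‖b‖²
  have hsplit : ‖a‖ ^ k * ⟪a, a - b⟫ - ‖b‖ ^ k * ⟪b, a - b⟫
      = (‖a‖ ^ k - ‖b‖ ^ k) * (‖a‖ ^ 2 - ‖b‖ ^ 2) / 2 + (‖a‖ ^ k + ‖b‖ ^ k) / 2 * ‖a - b‖ ^ 2 := by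
    rw [inner_sub_right, inner_sub_right, real_inner_self_eq_norm_sq, real_inner_self_eq_norm_sq,
      real_inner_comm a b, norm_sub_sq_real a b]
    ring
  have hmono : 0 ≤ (‖a‖ ^ k - ‖b‖ ^ k) * (‖a‖ ^ 2 - ‖b‖ ^ 2) := by
    rcases le_total ‖a‖ ‖b‖ with hab | hab
    · exact mul_nonneg_of_nonpos_of_nonpos (sub_nonpos.2 (pow_le_pow_left₀ ha hab k))
        (sub_nonpos.2 (pow_le_pow_left₀ ha hab 2))
    · exact mul_nonneg (sub_nonneg.2 (pow_le_pow_left₀ hb hab k))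
        (sub_nonneg.2 (pow_le_pow_left₀ hb hab 2))
  have hmid : (‖a - b‖ / 2) ^ k ≤ (‖a‖ ^ k + ‖b‖ ^ k) / 2 :=
    calc (‖a - b‖ / 2) ^ k ≤ ((‖a‖ + ‖b‖) / 2) ^ k :=
          pow_le_pow_left₀ (by positivity) (by linarith [norm_sub_le a b]) k
      _ ≤ (‖a‖ ^ k + ‖b‖ ^ k) / 2 := by
          have := (convexOn_pow k).2 (mem_Ici.2 ha) (mem_Ici.2 hb)
            (by norm_num : (0 : ℝ) ≤ 1 / 2) (by norm_num : (0 : ℝ) ≤ 1 / 2) (by norm_num)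
          simp only [smul_eq_mul] at this
          calc _ = (1 / 2 * ‖a‖ + 1 / 2 * ‖b‖) ^ k := by ring
            _ ≤ _ := this
            _ = _ := by ring
  calc (1 / 2 : ℝ) ^ k * ‖a - b‖ ^ (k + 2) = (‖a - b‖ / 2) ^ k * ‖a - b‖ ^ 2 := by ring
    _ ≤ (‖a‖ ^ k + ‖b‖ ^ k) / 2 * ‖a - b‖ ^ 2 := by gcongr
    _ ≤ _ := by rw [hsplit]; linarith

theorem norm_pow_add_inner_add_half_pow_le (k : ℕ) (y x : E) :
    ‖y‖ ^ (k + 2) + (k + 2) * ‖y‖ ^ k * ⟪y, x - y⟫ + (1 / 2 : ℝ) ^ k * ‖x - y‖ ^ (k + 2)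
      ≤ ‖x‖ ^ (k + 2) := by
  set w := x - y
  set c := (1 / 2 : ℝ) ^ k * ‖w‖ ^ (k + 2)
  set φ : ℝ → ℝ := fun t ↦
    ‖y + t • w‖ ^ (k + 2) - t * ((k + 2) * ‖y‖ ^ k * ⟪y, w⟫) - t ^ (k + 2) * c
  set φ' : ℝ → ℝ := fun t ↦ (k + 2) * ‖y + t • w‖ ^ k * ⟪y + t • w, w⟫
    - (k + 2) * ‖y‖ ^ k * ⟪y, w⟫ - (k + 2) * t ^ (k + 1) * c
  have hφ : ∀ t, HasDerivAt φ (φ' t) t := fun t ↦ by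
    have := ((hasDerivAt_norm_add_smul_pow_add_two k y w t).sub
      (hasDerivAt_mul_const ((k + 2) * ‖y‖ ^ k * ⟪y, w⟫))).sub
      ((hasDerivAt_pow (k + 2) t).mul_const c)
    refine this.congr_deriv ?_
    simp only [φ', show k + 2 - 1 = k + 1 from rfl]
    push_cast
    ring
  have hφ' : ∀ t ∈ interior (Icc (0 : ℝ) 1), 0 ≤ φ' t := by
    rw [interior_Icc]
    rintro t ⟨ht0, -⟩
    have key := half_pow_mul_norm_sub_pow_le_inner k (y + t • w) y
    rw [add_sub_cancel_left, norm_smul, Real.norm_of_nonneg ht0.le, inner_smul_right,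
      inner_smul_right, mul_pow] at key
    have : t ^ (k + 1) * c ≤ ‖y + t • w‖ ^ k * ⟪y + t • w, w⟫ - ‖y‖ ^ k * ⟪y, w⟫ := by
      refine le_of_mul_le_mul_left ?_ ht0
      calc t * (t ^ (k + 1) * c) = (1 / 2 : ℝ) ^ k * (t ^ (k + 2) * ‖w‖ ^ (k + 2)) := by ring
        _ ≤ _ := key
        _ = _ := by ring
    nlinarith [k.cast_nonneg (α := ℝ)]
  have hmono : MonotoneOn φ (Icc 0 1) :=
    monotoneOn_of_hasDerivWithinAt_nonneg (convex_Icc 0 1)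
      (fun t _ ↦ (hφ t).continuousAt.continuousWithinAt) (fun t _ ↦ (hφ t).hasDerivWithinAt) hφ'
  have := hmono (left_mem_Icc.2 zero_le_one) (right_mem_Icc.2 zero_le_one) zero_le_one
  simp only [φ, c, w, zero_smul, add_zero, zero_mul, sub_zero, one_smul, one_mul, one_pow,
    add_sub_cancel, zero_pow (Nat.succ_ne_zero _)] at this
  linarith

theorem hasFDerivAt_sum_mul_norm_sub_pow {s : Finset ℕ} (hs : ∀ i ∈ s, 2 ≤ i) (θ : ℕ → ℝ)
    (x₀ y : E) :
    HasFDerivAt (fun x ↦ ∑ i ∈ s, θ i * ((1 / (i : ℝ)) * ‖x - x₀‖ ^ i))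
      (∑ i ∈ s, (θ i * ‖y - x₀‖ ^ (i - 2)) • innerSL ℝ (y - x₀)) y := by
  refine HasFDerivAt.fun_sum fun i hi ↦ ?_
  obtain ⟨k, rfl⟩ := Nat.exists_eq_add_of_le' (hs i hi)
  have hpow := (hasFDerivAt_norm_pow_add_two k (y - x₀)).comp y ((hasFDerivAt_id y).sub_const x₀)
  refine ((hpow.const_mul (1 / ((k + 2 : ℕ) : ℝ))).const_mul (θ (k + 2))).congr_fderiv ?_
  ext v
  simp only [Nat.add_sub_cancel, smul_apply, ContinuousLinearMap.comp_id, smul_eq_mul]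
  push_cast
  field_simp

theorem sum_mul_norm_sub_pow_add_inner_add_half_pow_le {s : Finset ℕ} (hs : ∀ i ∈ s, 2 ≤ i)
    {θ : ℕ → ℝ} (hθ : ∀ i ∈ s, 0 ≤ θ i) (x₀ y x : E) :
    ∑ i ∈ s, θ i * ((1 / (i : ℝ)) * ‖y - x₀‖ ^ i)
        + ∑ i ∈ s, θ i * ‖y - x₀‖ ^ (i - 2) * ⟪y - x₀, x - y⟫
        + ∑ i ∈ s, (1 / 2 : ℝ) ^ (i - 2) * θ i * ((1 / (i : ℝ)) * ‖x - y‖ ^ i)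
      ≤ ∑ i ∈ s, θ i * ((1 / (i : ℝ)) * ‖x - x₀‖ ^ i) := by
  simp only [← Finset.sum_add_distrib]
  refine Finset.sum_le_sum fun i hi ↦ ?_
  obtain ⟨k, rfl⟩ := Nat.exists_eq_add_of_le' (hs i hi)
  have hgrowth := norm_pow_add_inner_add_half_pow_le k (y - x₀) (x - x₀)
  rw [sub_sub_sub_cancel_right] at hgrowth
  have hc : 0 ≤ θ (k + 2) * (1 / ((k + 2 : ℕ) : ℝ)) := mul_nonneg (hθ _ hi) (by positivity)
  calc _ = θ (k + 2) * (1 / ((k + 2 : ℕ) : ℝ)) * (‖y - x₀‖ ^ (k + 2)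
        + (k + 2) * ‖y - x₀‖ ^ k * ⟪y - x₀, x - y⟫ + (1 / 2 : ℝ) ^ k * ‖x - y‖ ^ (k + 2)) := by
        simp only [Nat.add_sub_cancel]
        push_cast
        field_simp
    _ ≤ θ (k + 2) * (1 / ((k + 2 : ℕ) : ℝ)) * ‖x - x₀‖ ^ (k + 2) := by gcongr
    _ = _ := by ring

theorem regularized_minimizer_growth_general
    (n : ℕ) (h : EuclideanSpace ℝ (Fin n) → ℝ)
    (hconv : ConvexOn ℝ Set.univ h)
    (x₀ : EuclideanSpace ℝ (Fin n)) (p : ℕ)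
    (θ : ℕ → ℝ) (hθ : ∀ i ∈ Finset.Icc 2 (p + 1), 0 ≤ θ i)
    (xb : EuclideanSpace ℝ (Fin n))
    (hmin : ∀ x : EuclideanSpace ℝ (Fin n),
      h xb + ∑ i ∈ Finset.Icc 2 (p + 1), θ i * ((1 / (i : ℝ)) * ‖xb - x₀‖ ^ i)
        ≤ h x + ∑ i ∈ Finset.Icc 2 (p + 1), θ i * ((1 / (i : ℝ)) * ‖x - x₀‖ ^ i)) :
    ∀ x : EuclideanSpace ℝ (Fin n),
      h x + ∑ i ∈ Finset.Icc 2 (p + 1), θ i * ((1 / (i : ℝ)) * ‖x - x₀‖ ^ i)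
        ≥ (h xb + ∑ i ∈ Finset.Icc 2 (p + 1), θ i * ((1 / (i : ℝ)) * ‖xb - x₀‖ ^ i))
          + ∑ i ∈ Finset.Icc 2 (p + 1),
              ((1 / 2 : ℝ)) ^ (i - 2) * θ i * ((1 / (i : ℝ)) * ‖x - xb‖ ^ i) := by
  intro x
  have hs : ∀ i ∈ Finset.Icc 2 (p + 1), 2 ≤ i := fun i hi ↦ (Finset.mem_Icc.1 hi).1
  have hopt := hconv.fderiv_le_sub_of_isMinOn_add (hasFDerivAt_sum_mul_norm_sub_pow hs θ x₀ xb)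
    (isMinOn_univ_iff.2 hmin) x
  rw [← neg_sub x xb, map_neg, sum_apply] at hopt
  simp only [smul_apply, innerSL_apply_apply, smul_eq_mul] at hopt
  linarith [sum_mul_norm_sub_pow_add_inner_add_half_pow_le hs hθ x₀ xb x]

/-- Regularized minimizer lemma: if `x̄` minimizes
`h̄(x) = h(x) + Σ_{i=2}^{p+1} θ_i d_i(x - x₀)` with `h` convex and
`d_i(x) = (1/i)‖x‖^i`, then `h̄(x) ≥ h̄(x̄) + Σ_{i=2}^{p+1} (1/2)^{i-2} θ_i d_i(x - x̄)`. -/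
theorem regularized_minimizer_growth
    (n : ℕ) (hn : 1 ≤ n) (h : EuclideanSpace ℝ (Fin n) → ℝ)
    (hconv : ConvexOn ℝ Set.univ h)
    (x₀ : EuclideanSpace ℝ (Fin n)) (p : ℕ) (hp : 1 ≤ p)
    (θ : ℕ → ℝ) (hθ : ∀ i ∈ Finset.Icc 2 (p + 1), 0 ≤ θ i)
    (xb : EuclideanSpace ℝ (Fin n))
    (hmin : ∀ x : EuclideanSpace ℝ (Fin n),
      h xb + ∑ i ∈ Finset.Icc 2 (p + 1), θ i * ((1 / (i : ℝ)) * ‖xb - x₀‖ ^ i)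
        ≤ h x + ∑ i ∈ Finset.Icc 2 (p + 1), θ i * ((1 / (i : ℝ)) * ‖x - x₀‖ ^ i)) :
    ∀ x : EuclideanSpace ℝ (Fin n),
      h x + ∑ i ∈ Finset.Icc 2 (p + 1), θ i * ((1 / (i : ℝ)) * ‖x - x₀‖ ^ i)
        ≥ (h xb + ∑ i ∈ Finset.Icc 2 (p + 1), θ i * ((1 / (i : ℝ)) * ‖xb - x₀‖ ^ i))
          + ∑ i ∈ Finset.Icc 2 (p + 1),
              ((1 / 2 : ℝ)) ^ (i - 2) * θ i * ((1 / (i : ℝ)) * ‖x - xb‖ ^ i) :=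
  regularized_minimizer_growth_general n h hconv x₀ p θ hθ xb hmin
end

section
/- (Upper bound on the estimating sequence.) Let f: ℝ^d → ℝ be convex and differentiable, let t ≥ 1 be an integer, let x₀, x* ∈ ℝ^d, let x_1,…,x_t ∈ ℝ^d and g_1,…,g_t ∈ ℝ^d, and let λ, κ₂, κ₃ ≥ 0. Set α_j = 3/(j+3) for j ≥ 0 (so α_0 = 1), A_0 = 1 and A_j = Π_{k=1}^j (1 − α_k) for j ≥ 1, and define ψ_t(x) = ((κ₂ + λ)/2)‖x − x₀‖² + (κ₃/3)‖x − x₀‖³ + Σ_{j=0}^{t−1} (α_j/A_j)·(f(x_{j+1}) + ⟨g_{j+1}, x − x_{j+1}⟩). Then ψ_t(x*) ≤ f(x*)/A_{t−1} + ((κ₂ + λ)/2)‖x* − x₀‖² + (κ₃/3)‖x* − x₀‖³ + Σ_{j=0}^{t−1} (α_j/A_j)·⟨g_{j+1} − ∇f(x_{j+1}), x* − x_{j+1}⟩. -/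
/-!
Along each segment `x_{j+1} → x*`, convexity gives the first-order bound
`f(x_{j+1}) + ⟨∇f(x_{j+1}), x* − x_{j+1}⟩ ≤ f(x*)`; replacing `∇f(x_{j+1})` by `g_{j+1}` costs
exactly the error term `⟨g_{j+1} − ∇f(x_{j+1}), x* − x_{j+1}⟩`. Summing with the nonnegative
weights `α_j / A_j`, which telescope to `1 / A_{t−1}`, gives the bound.
-/

open scoped RealInnerProductSpace
open Finset

/-- `α_j = 3/(j+3)`. -/
noncomputable def accAlpha (j : ℕ) : ℝ := 3 / ((j : ℝ) + 3)

/-- `A_0 = 1`, `A_j = Π_{k=1}^j (1 - α_k)`. -/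
noncomputable def accA (j : ℕ) : ℝ := ∏ k ∈ Finset.Icc 1 j, (1 - accAlpha k)

section FirstOrder

variable {E : Type*}

theorem ConvexOn.add_fderiv_sub_le [NormedAddCommGroup E] [NormedSpace ℝ E]
    {s : Set E} {f : E → ℝ} (hf : ConvexOn ℝ s f) {a b : E} (ha : a ∈ s) (hb : b ∈ s)
    (hfa : DifferentiableAt ℝ f a) :
    f a + fderiv ℝ f a (b - a) ≤ f b := by
  let L : ℝ →ᵃ[ℝ] E := AffineMap.lineMap a b
  have hL0 : L 0 = a := AffineMap.lineMap_apply_zero a b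
  have hL1 : L 1 = b := AffineMap.lineMap_apply_one a b
  have hderiv : HasDerivAt (f ∘ L) (fderiv ℝ f a (b - a)) 0 := by
    refine HasFDerivAt.comp_hasDerivAt (0 : ℝ) ?_ AffineMap.hasDerivAt_lineMap
    simpa [hL0] using hfa.hasFDerivAt
  have hslope := (hf.comp_affineMap L).le_slope_of_hasDerivAt (x := 0) (y := 1)
    (by simpa [hL0] using ha) (by simpa [hL1] using hb) one_pos hderiv
  simp only [slope_def_field, Function.comp_apply, hL0, hL1, sub_zero, div_one] at hslope
  linarith

variable [NormedAddCommGroup E] [InnerProductSpace ℝ E] [CompleteSpace E]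

theorem ConvexOn.add_inner_gradient_sub_le {s : Set E} {f : E → ℝ} (hf : ConvexOn ℝ s f)
    {a b : E} (ha : a ∈ s) (hb : b ∈ s) (hfa : DifferentiableAt ℝ f a) :
    f a + ⟪gradient f a, b - a⟫ ≤ f b := by
  simpa only [inner_gradient_left] using hf.add_fderiv_sub_le ha hb hfa

theorem ConvexOn.sum_mul_add_inner_le {ι : Type*} {s : Set E} {f : E → ℝ}
    (hf : ConvexOn ℝ s f) (I : Finset ι) (w : ι → ℝ) (hw : ∀ i ∈ I, 0 ≤ w i)
    (y g : ι → E) (hy : ∀ i ∈ I, y i ∈ s) (hfy : ∀ i ∈ I, DifferentiableAt ℝ f (y i))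
    {z : E} (hz : z ∈ s) :
    ∑ i ∈ I, w i * (f (y i) + ⟪g i, z - y i⟫)
      ≤ (∑ i ∈ I, w i) * f z + ∑ i ∈ I, w i * ⟪g i - gradient f (y i), z - y i⟫ := by
  rw [sum_mul, ← sum_add_distrib]
  refine sum_le_sum fun i hi => ?_
  have hfirst := hf.add_inner_gradient_sub_le (hy i hi) hz (hfy i hi)
  have hwi := hw i hi
  calc w i * (f (y i) + ⟪g i, z - y i⟫)
      = w i * (f (y i) + ⟪gradient f (y i), z - y i⟫)
          + w i * ⟪g i - gradient f (y i), z - y i⟫ := by rw [inner_sub_left]; ring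
    _ ≤ w i * f z + w i * ⟪g i - gradient f (y i), z - y i⟫ := by gcongr

end FirstOrder

theorem one_sub_accAlpha_pos {k : ℕ} (hk : 1 ≤ k) : 0 < 1 - accAlpha k := by
  have hk' : (1 : ℝ) ≤ k := by exact_mod_cast hk
  rw [accAlpha, sub_pos, div_lt_one (by positivity)]
  linarith

theorem accA_pos (j : ℕ) : 0 < accA j :=
  prod_pos fun _ hk => one_sub_accAlpha_pos (mem_Icc.mp hk).1

theorem accAlpha_nonneg (j : ℕ) : 0 ≤ accAlpha j := by
  unfold accAlpha
  positivity

theorem accA_succ (j : ℕ) : accA (j + 1) = accA j * (1 - accAlpha (j + 1)) :=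
  prod_Icc_succ_top (Nat.le_add_left 1 j) _

theorem accAlpha_div_accA_succ (j : ℕ) :
    accAlpha (j + 1) / accA (j + 1) = 1 / accA (j + 1) - 1 / accA j := by
  have hA := (accA_pos j).ne'
  have hα := (one_sub_accAlpha_pos (Nat.le_add_left 1 j)).ne'
  rw [accA_succ]
  field_simp
  ring

theorem sum_range_succ_accAlpha_div_accA (n : ℕ) :
    ∑ j ∈ range (n + 1), accAlpha j / accA j = 1 / accA n := by
  induction n with
  | zero => simp [accAlpha, accA]
  | succ n ih => rw [sum_range_succ, ih, accAlpha_div_accA_succ]; ring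

theorem estimating_sequence_upper_bound_general
    (d : ℕ) (f : EuclideanSpace ℝ (Fin d) → ℝ)
    (hconv : ConvexOn ℝ Set.univ f) (hdiff : Differentiable ℝ f)
    (t : ℕ) (ht : 1 ≤ t)
    (x₀ xs : EuclideanSpace ℝ (Fin d))
    (x g : ℕ → EuclideanSpace ℝ (Fin d))
    (lam κ₂ κ₃ : ℝ) :
    ((κ₂ + lam) / 2) * ‖xs - x₀‖ ^ 2 + (κ₃ / 3) * ‖xs - x₀‖ ^ 3
        + ∑ j ∈ Finset.range t,
            (accAlpha j / accA j) * (f (x (j + 1)) + ⟪g (j + 1), xs - x (j + 1)⟫)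
      ≤ f xs / accA (t - 1)
        + ((κ₂ + lam) / 2) * ‖xs - x₀‖ ^ 2 + (κ₃ / 3) * ‖xs - x₀‖ ^ 3
        + ∑ j ∈ Finset.range t,
            (accAlpha j / accA j) * ⟪g (j + 1) - gradient f (x (j + 1)), xs - x (j + 1)⟫ := by
  obtain ⟨n, rfl⟩ : ∃ n, t = n + 1 := ⟨t - 1, by omega⟩
  have hsum := hconv.sum_mul_add_inner_le (range (n + 1)) (fun j => accAlpha j / accA j)
    (fun j _ => div_nonneg (accAlpha_nonneg j) (accA_pos j).le)
    (fun j => x (j + 1)) (fun j => g (j + 1)) (fun _ _ => Set.mem_univ _) (fun _ _ => hdiff _)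
    (Set.mem_univ xs)
  rw [sum_range_succ_accAlpha_div_accA, one_div_mul_eq_div] at hsum
  rw [Nat.add_sub_cancel]
  linarith

/-- Upper bound on the estimating sequence. -/
theorem estimating_sequence_upper_bound
    (d : ℕ) (f : EuclideanSpace ℝ (Fin d) → ℝ)
    (hconv : ConvexOn ℝ Set.univ f) (hdiff : Differentiable ℝ f)
    (t : ℕ) (ht : 1 ≤ t)
    (x₀ xs : EuclideanSpace ℝ (Fin d))
    (x g : ℕ → EuclideanSpace ℝ (Fin d))
    (lam κ₂ κ₃ : ℝ) (hlam : 0 ≤ lam) (hκ₂ : 0 ≤ κ₂) (hκ₃ : 0 ≤ κ₃) :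
    ((κ₂ + lam) / 2) * ‖xs - x₀‖ ^ 2 + (κ₃ / 3) * ‖xs - x₀‖ ^ 3
        + ∑ j ∈ Finset.range t,
            (accAlpha j / accA j) * (f (x (j + 1)) + ⟪g (j + 1), xs - x (j + 1)⟫)
      ≤ f xs / accA (t - 1)
        + ((κ₂ + lam) / 2) * ‖xs - x₀‖ ^ 2 + (κ₃ / 3) * ‖xs - x₀‖ ^ 3
        + ∑ j ∈ Finset.range t,
            (accAlpha j / accA j) * ⟪g (j + 1) - gradient f (x (j + 1)), xs - x (j + 1)⟫ :=
  estimating_sequence_upper_bound_general d f hconv hdiff t ht x₀ xs x g lam κ₂ κ₃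
end

section
/- (Closed-form solution of the outer subproblem.) Let d ≥ 1, x₀, S ∈ ℝ^d, a > 0 and κ₃ > 0. Define r = (√(a² + 4κ₃‖S‖) − a)/(2κ₃) and y* = x₀ − S/(a + κ₃ r). Then y* is the unique global minimizer over ℝ^d of ψ(y) = (a/2)‖y − x₀‖² + (κ₃/3)‖y − x₀‖³ + ⟨S, y⟩, and ‖y* − x₀‖ = r. -/
open scoped RealInnerProductSpace

/-- Closed-form solution of the outer subproblem:
`y* = x₀ - S/(a + κ₃ r)` with `r = (√(a² + 4κ₃‖S‖) - a)/(2κ₃)` is the unique global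
minimizer of `ψ(y) = (a/2)‖y-x₀‖² + (κ₃/3)‖y-x₀‖³ + ⟪S, y⟫`, and `‖y* - x₀‖ = r`. -/
theorem outer_subproblem_closed_form
    (d : ℕ) (hd : 1 ≤ d) (x₀ S : EuclideanSpace ℝ (Fin d))
    (a κ₃ : ℝ) (ha : 0 < a) (hκ₃ : 0 < κ₃) :
    (∀ y : EuclideanSpace ℝ (Fin d),
        y ≠ x₀ - ((a + κ₃ * ((Real.sqrt (a ^ 2 + 4 * κ₃ * ‖S‖) - a) / (2 * κ₃)))⁻¹) • S →
        (a / 2) * ‖(x₀ - ((a + κ₃ * ((Real.sqrt (a ^ 2 + 4 * κ₃ * ‖S‖) - a) / (2 * κ₃)))⁻¹) • S) - x₀‖ ^ 2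
          + (κ₃ / 3) * ‖(x₀ - ((a + κ₃ * ((Real.sqrt (a ^ 2 + 4 * κ₃ * ‖S‖) - a) / (2 * κ₃)))⁻¹) • S) - x₀‖ ^ 3
          + ⟪S, x₀ - ((a + κ₃ * ((Real.sqrt (a ^ 2 + 4 * κ₃ * ‖S‖) - a) / (2 * κ₃)))⁻¹) • S⟫
        < (a / 2) * ‖y - x₀‖ ^ 2 + (κ₃ / 3) * ‖y - x₀‖ ^ 3 + ⟪S, y⟫) ∧
    ‖(x₀ - ((a + κ₃ * ((Real.sqrt (a ^ 2 + 4 * κ₃ * ‖S‖) - a) / (2 * κ₃)))⁻¹) • S) - x₀‖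
      = (Real.sqrt (a ^ 2 + 4 * κ₃ * ‖S‖) - a) / (2 * κ₃) := by
  set R := Real.sqrt (a ^ 2 + 4 * κ₃ * ‖S‖) with hRdef
  set r := (R - a) / (2 * κ₃) with hrdef
  set m := a + κ₃ * r with hmdef
  have hS0 : (0:ℝ) ≤ ‖S‖ := norm_nonneg _
  have hR2 : R ^ 2 = a ^ 2 + 4 * κ₃ * ‖S‖ := Real.sq_sqrt (by positivity)
  have hR0 : 0 ≤ R := Real.sqrt_nonneg _
  have hRa : a ≤ R := by nlinarith
  have hr0 : 0 ≤ r := div_nonneg (by linarith) (by positivity)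
  have hm0 : 0 < m := add_pos_of_pos_of_nonneg ha (mul_nonneg hκ₃.le hr0)
  have hmr : m * r = ‖S‖ := by
    rw [hmdef, hrdef]
    field_simp
    nlinarith [hR2]
  have hmdef' : m = a + κ₃ * r := hmdef
  clear_value R r m
  -- norm of y* - x₀
  have hyx : (x₀ - m⁻¹ • S) - x₀ = -(m⁻¹ • S) := by abel
  have hnorm : ‖(x₀ - m⁻¹ • S) - x₀‖ = r := by
    rw [hyx, norm_neg, norm_smul, Real.norm_eq_abs, abs_inv, abs_of_pos hm0]
    field_simp
    linarith [hmr]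
  refine ⟨?_, hnorm⟩
  intro y hy
  have hw0 : (0:ℝ) < ‖y - (x₀ - m⁻¹ • S)‖ := by
    rw [norm_pos_iff]
    exact sub_ne_zero.mpr hy
  set t := ‖y - x₀‖ with htdef
  set w := ‖y - (x₀ - m⁻¹ • S)‖ with hwdef
  have ht0 : (0:ℝ) ≤ t := norm_nonneg _
  clear_value t w
  -- expand w^2
  have hveq : y - (x₀ - m⁻¹ • S) = (y - x₀) + m⁻¹ • S := by abel
  have hwsq : w ^ 2 = t ^ 2 + 2 * (m⁻¹ * ⟪S, y - x₀⟫) + (m⁻¹ * ‖S‖) ^ 2 := by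
    rw [htdef, hwdef, hveq, ← real_inner_self_eq_norm_sq, inner_add_add_self]
    simp only [real_inner_smul_right, real_inner_smul_left,
      real_inner_self_eq_norm_sq, real_inner_comm (y - x₀) S,
      norm_smul, Real.norm_eq_abs, mul_pow, sq_abs]
    ring
  have hSr : m⁻¹ * ‖S‖ = r := by field_simp; linarith [hmr]
  have hinner_y : ⟪S, y⟫ = ⟪S, x₀⟫ + ⟪S, y - x₀⟫ := by
    rw [← inner_add_right]; congr 1; abel
  have hinner_ystar : ⟪S, x₀ - m⁻¹ • S⟫ = ⟪S, x₀⟫ - m⁻¹ * ‖S‖ ^ 2 := by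
    rw [inner_sub_right, real_inner_smul_right, real_inner_self_eq_norm_sq]
  -- from hwsq: ⟪S, y - x₀⟫ = m/2 * (w^2 - t^2 - r^2)
  have hIv : ⟪S, y - x₀⟫ = m / 2 * (w ^ 2 - t ^ 2 - r ^ 2) := by
    have h1 : m⁻¹ * ⟪S, y - x₀⟫ = (w ^ 2 - t ^ 2 - r ^ 2) / 2 := by
      rw [hSr] at hwsq; linarith
    have h2 : m * (m⁻¹ * ⟪S, y - x₀⟫) = m * ((w ^ 2 - t ^ 2 - r ^ 2) / 2) := by rw [h1]
    rw [← mul_assoc, mul_inv_cancel₀ hm0.ne', one_mul] at h2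
    linarith
  have hmS2 : m⁻¹ * ‖S‖ ^ 2 = m * r ^ 2 := by
    have : m⁻¹ * ‖S‖ ^ 2 = (m⁻¹ * ‖S‖) * ‖S‖ := by ring
    rw [this, hSr, ← hmr]; ring
  rw [hnorm, hinner_y, hinner_ystar, hIv, hmS2]
  have hw2 : 0 < m * w ^ 2 := mul_pos hm0 (pow_pos hw0 2)
  have expand : a / 2 * t ^ 2 + κ₃ / 3 * t ^ 3 + m / 2 * (w ^ 2 - t ^ 2 - r ^ 2)
      - (a / 2 * r ^ 2 + κ₃ / 3 * r ^ 3 - m * r ^ 2)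
      = κ₃ / 6 * ((t - r) ^ 2 * (2 * t + r)) + m / 2 * w ^ 2 := by
    rw [hmdef']; ring
  have key' : 0 ≤ κ₃ / 6 * ((t - r) ^ 2 * (2 * t + r)) :=
    mul_nonneg (by positivity) (mul_nonneg (sq_nonneg _) (by linarith))
  linarith [key', hw2, expand]
end
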